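/- arXiv:1511.08415 — 4 statements merged into one kernel-verified Lean document; each statement's English description precedes it below -/
import Mathlib

section
/- For the alphabet A = {0, 1, 4, 5} and base β = 8/3, the only unique expansions over A are the constant sequences 0,0,0,… and 5,5,5,…; that is, every x ∈ (0, 5/(β−1)) with an expansion other than all-zeros or all-fives has at least two distinct β-expansions over A. -/
/-!
In base `8/3` every expansion over `{0, 1, 4, 5}` has value in `[0, 3]`, and conversely every
point of `[0, 3]` has one: the greedy map `y ↦ 8/3 * y - d(y)` keeps `[0, 3]` invariant because
the digit intervals `[0, 9/8]`, `[3/8, 3/2]`, `[3/2, 21/8]`, `[15/8, 3]` cover it.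
Hence if `u` is a unique expansion and `r` is the value of its tail, no other digit `a` may put
`r + u 0 - a` into `[0, 3]`. This forces `r < 1` after a `0`, `2 < r < 3` after a `1`,
`0 < r < 1` after a `4` and `2 < r` after a `5`. So a unique expansion of value below `1` starts
with `0` and its tail again has value below `1`: it is all zeros; symmetrically, value above `2`
forces all fives. A leading `1` would thus make the tail all fives, i.e. `r = 3`, and a leading
`4` would make it all zeros, i.e. `r = 0`, both excluded.
-/

open Set Filter Topology

noncomputable def expansionValue (β : ℝ) (u : ℕ → ℝ) : ℝ := ∑' k, u k / β ^ (k + 1)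

def IsUniqueExpansion (D : Set ℝ) (β : ℝ) (u : ℕ → ℝ) : Prop :=
  ∀ v : ℕ → ℝ, (∀ k, v k ∈ D) → expansionValue β v = expansionValue β u → v = u

section ExpansionValue

variable {β M : ℝ} {u : ℕ → ℝ}

lemma hasSum_const_div_pow (hβ : 1 < β) (c : ℝ) :
    HasSum (fun k : ℕ => c / β ^ (k + 1)) (c / (β - 1)) := by
  have hgeom := (hasSum_geometric_of_lt_one (inv_nonneg.2 (by positivity : (0 : ℝ) ≤ β))
    (inv_lt_one_of_one_lt₀ hβ)).mul_left (c / β)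
  have hsum : c / β * (1 - β⁻¹)⁻¹ = c / (β - 1) := by
    field_simp
  have hterm : (fun k : ℕ => c / β * β⁻¹ ^ k) = fun k => c / β ^ (k + 1) := by
    ext k
    rw [pow_succ, inv_pow]
    field_simp
  rwa [hsum, hterm] at hgeom

lemma expansionValue_const (hβ : 1 < β) (c : ℝ) :
    expansionValue β (fun _ => c) = c / (β - 1) :=
  (hasSum_const_div_pow hβ c).tsum_eq

lemma div_pow_le_of_mem_Icc (hβ : 1 < β) (hu : ∀ k, u k ∈ Icc 0 M) (k : ℕ) :
    u k / β ^ (k + 1) ≤ M / β ^ (k + 1) :=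
  div_le_div_of_nonneg_right (hu k).2 (by positivity)

lemma div_pow_nonneg_of_mem_Icc (hβ : 1 < β) (hu : ∀ k, u k ∈ Icc 0 M) (k : ℕ) :
    0 ≤ u k / β ^ (k + 1) :=
  div_nonneg (hu k).1 (by positivity)

lemma summable_div_pow (hβ : 1 < β) (hu : ∀ k, u k ∈ Icc 0 M) :
    Summable (fun k => u k / β ^ (k + 1)) :=
  (hasSum_const_div_pow hβ M).summable.of_nonneg_of_le (div_pow_nonneg_of_mem_Icc hβ hu)
    (div_pow_le_of_mem_Icc hβ hu)

lemma expansionValue_mem_Icc (hβ : 1 < β) (hu : ∀ k, u k ∈ Icc 0 M) :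
    expansionValue β u ∈ Icc 0 (M / (β - 1)) :=
  ⟨tsum_nonneg (div_pow_nonneg_of_mem_Icc hβ hu),
    hasSum_le (div_pow_le_of_mem_Icc hβ hu) (summable_div_pow hβ hu).hasSum
      (hasSum_const_div_pow hβ M)⟩

lemma expansionValue_eq_div (hs : Summable (fun k => u k / β ^ (k + 1))) :
    expansionValue β u = (u 0 + expansionValue β (fun k => u (k + 1))) / β := by
  rw [expansionValue, hs.tsum_eq_zero_add, expansionValue, add_div, ← tsum_div_const]
  simp only [zero_add, pow_one, pow_succ _ (_ + 1), div_div]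

lemma expansionValue_cons (hβ : 1 < β) {a : ℝ} (ha : a ∈ Icc 0 M) {w : ℕ → ℝ}
    (hw : ∀ k, w k ∈ Icc 0 M) :
    expansionValue β (Stream'.cons a w) = (a + expansionValue β w) / β := by
  refine expansionValue_eq_div (summable_div_pow hβ (M := M) fun k => ?_)
  cases k
  exacts [ha, hw _]

lemma expansionValue_iterate (hβ : 1 < β) {c x : ℝ} (d : ℝ → ℝ) (hd : ∀ y, 0 ≤ d y)
    (hT : MapsTo (fun y => β * y - d y) (Icc 0 c) (Icc 0 c)) (hx : x ∈ Icc 0 c) :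
    expansionValue β (fun n => d ((fun y => β * y - d y)^[n] x)) = x := by
  set T := fun y => β * y - d y
  have horbit : ∀ n, T^[n] x ∈ Icc 0 c := fun n => hT.iterate n hx
  have hpartial :
      ∀ n, ∑ k ∈ Finset.range n, d (T^[k] x) / β ^ (k + 1) = x - T^[n] x / β ^ n := by
    intro n
    induction n with
    | zero => simp
    | succ n ih =>
      rw [Finset.sum_range_succ, ih, Function.iterate_succ_apply']
      field_simp
      ring
  have hterm : ∀ k, 0 ≤ d (T^[k] x) / β ^ (k + 1) := fun k => div_nonneg (hd _) (by positivity)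
  refine ((hasSum_iff_tendsto_nat_of_nonneg hterm x).2 ?_).tsum_eq
  simp only [hpartial]
  have hsmall : Tendsto (fun n => T^[n] x / β ^ n) atTop (𝓝 0) := by
    refine squeeze_zero (fun n => div_nonneg (horbit n).1 (by positivity))
      (fun n => div_le_div_of_nonneg_right (horbit n).2 (by positivity)) ?_
    exact tendsto_const_nhds.div_atTop (tendsto_pow_atTop_atTop_of_one_lt hβ)
  simpa using tendsto_const_nhds.sub hsmall

end ExpansionValue

section Uniqueness

variable {D : Set ℝ} {β M : ℝ} {u : ℕ → ℝ}

lemma IsUniqueExpansion.cons_eq (hβ : 1 < β) (hD : D ⊆ Icc 0 M) (hu : IsUniqueExpansion D β u)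
    (huD : ∀ k, u k ∈ D) {a : ℝ} (ha : a ∈ D) {w : ℕ → ℝ} (hw : ∀ k, w k ∈ D)
    (hval : a + expansionValue β w = u 0 + expansionValue β (fun k => u (k + 1))) :
    Stream'.cons a w = u := by
  refine hu _ (fun k => ?_) ?_
  · cases k
    exacts [ha, hw _]
  · rw [expansionValue_cons hβ (hD ha) (fun k => hD (hw k)), hval,
      ← expansionValue_eq_div (summable_div_pow hβ fun k => hD (huD k))]

lemma IsUniqueExpansion.shift (hβ : 1 < β) (hD : D ⊆ Icc 0 M) (hu : IsUniqueExpansion D β u)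
    (huD : ∀ k, u k ∈ D) : IsUniqueExpansion D β (fun k => u (k + 1)) := by
  intro w hw hval
  funext k
  exact congrFun (hu.cons_eq hβ hD huD (huD 0) hw (by rw [hval])) (k + 1)

lemma IsUniqueExpansion.notMem_Icc (hβ : 1 < β) (hD : D ⊆ Icc 0 M) {c : ℝ}
    (hcover : ∀ y ∈ Icc 0 c, ∃ w : ℕ → ℝ, (∀ k, w k ∈ D) ∧ expansionValue β w = y)
    (hu : IsUniqueExpansion D β u) (huD : ∀ k, u k ∈ D) {a : ℝ} (ha : a ∈ D) (hne : a ≠ u 0) :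
    expansionValue β (fun k => u (k + 1)) + u 0 - a ∉ Icc 0 c := by
  intro hy
  obtain ⟨w, hw, hval⟩ := hcover _ hy
  exact hne (congrFun (hu.cons_eq hβ hD huD ha hw (by rw [hval]; ring)) 0)

end Uniqueness

def digits0145 : Set ℝ := {0, 1, 4, 5}

lemma digits0145_subset_Icc : digits0145 ⊆ Icc 0 5 := by
  rintro a (rfl | rfl | rfl | rfl) <;> norm_num

noncomputable def greedyDigit (y : ℝ) : ℝ :=
  if y < 3 / 8 then 0 else if y < 3 / 2 then 1 else if y < 15 / 8 then 4 else 5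

lemma greedyDigit_mem (y : ℝ) : greedyDigit y ∈ digits0145 := by
  unfold greedyDigit digits0145
  split_ifs <;> simp

lemma mapsTo_greedy : MapsTo (fun y => 8 / 3 * y - greedyDigit y) (Icc 0 3) (Icc 0 3) := by
  rintro y ⟨hy₀, hy₃⟩
  simp only [greedyDigit, mem_Icc]
  split_ifs <;> constructor <;> linarith

lemma exists_expansion_of_mem_Icc {y : ℝ} (hy : y ∈ Icc 0 3) :
    ∃ w : ℕ → ℝ, (∀ k, w k ∈ digits0145) ∧ expansionValue (8 / 3) w = y :=
  ⟨_, fun _ => greedyDigit_mem _, expansionValue_iterate (by norm_num) greedyDigit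
    (fun y => (digits0145_subset_Icc (greedyDigit_mem y)).1) mapsTo_greedy hy⟩

section Classification

variable {u : ℕ → ℝ}

lemma expansionValue_mem_Icc_of_digits0145 (hu : ∀ k, u k ∈ digits0145) :
    expansionValue (8 / 3) u ∈ Icc 0 3 := by
  have := expansionValue_mem_Icc (β := 8 / 3) (by norm_num) fun k => digits0145_subset_Icc (hu k)
  norm_num at this
  exact this

lemma IsUniqueExpansion.firstDigit_cases (hu : IsUniqueExpansion digits0145 (8 / 3) u)
    (huD : ∀ k, u k ∈ digits0145) :
    let r := expansionValue (8 / 3) (fun k => u (k + 1))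
    u 0 = 0 ∧ r < 1 ∨ u 0 = 1 ∧ 2 < r ∧ r < 3 ∨ u 0 = 4 ∧ 0 < r ∧ r < 1 ∨ u 0 = 5 ∧ 2 < r := by
  intro r
  have hswap {a : ℝ} (ha : a ∈ digits0145) (hne : a ≠ u 0) :
      r + u 0 - a < 0 ∨ 3 < r + u 0 - a := by
    simpa only [mem_Icc, not_and_or, not_le] using hu.notMem_Icc (by norm_num)
      digits0145_subset_Icc (fun _ => exists_expansion_of_mem_Icc) huD ha hne
  obtain ⟨hr₀, hr₃⟩ := expansionValue_mem_Icc_of_digits0145 fun k => huD (k + 1)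
  have h0 : (0 : ℝ) ∈ digits0145 := by simp [digits0145]
  have h1 : (1 : ℝ) ∈ digits0145 := by simp [digits0145]
  have h4 : (4 : ℝ) ∈ digits0145 := by simp [digits0145]
  have h5 : (5 : ℝ) ∈ digits0145 := by simp [digits0145]
  rcases huD 0 with hu0 | hu0 | hu0 | hu0 <;> rw [hu0] at hswap ⊢
  · exact .inl ⟨rfl, by rcases hswap h1 (by norm_num) with h | h <;> linarith⟩
  · refine .inr (.inl ⟨rfl, ?_, ?_⟩)
    · rcases hswap h0 (by norm_num) with h | h <;> linarith
    · rcases hswap h4 (by norm_num) with h | h <;> linarith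
  · refine .inr (.inr (.inl ⟨rfl, ?_, ?_⟩))
    · rcases hswap h1 (by norm_num) with h | h <;> linarith
    · rcases hswap h5 (by norm_num) with h | h <;> linarith
  · exact .inr (.inr (.inr ⟨rfl, by rcases hswap h4 (by norm_num) with h | h <;> linarith⟩))

lemma expansionValue_eq_of_digits0145 (hu : ∀ k, u k ∈ digits0145) :
    expansionValue (8 / 3) u = (u 0 + expansionValue (8 / 3) (fun k => u (k + 1))) / (8 / 3) :=
  expansionValue_eq_div (summable_div_pow (by norm_num) fun k => digits0145_subset_Icc (hu k))

lemma IsUniqueExpansion.shift_digits0145 (hu : IsUniqueExpansion digits0145 (8 / 3) u)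
    (huD : ∀ k, u k ∈ digits0145) : IsUniqueExpansion digits0145 (8 / 3) (fun k => u (k + 1)) :=
  hu.shift (by norm_num) digits0145_subset_Icc huD

lemma IsUniqueExpansion.head_eq_zero_of_lt_one (hu : IsUniqueExpansion digits0145 (8 / 3) u)
    (huD : ∀ k, u k ∈ digits0145) (hx : expansionValue (8 / 3) u < 1) :
    u 0 = 0 ∧ expansionValue (8 / 3) (fun k => u (k + 1)) < 1 := by
  have hr₀ := (expansionValue_mem_Icc_of_digits0145 fun k => huD (k + 1)).1
  rw [expansionValue_eq_of_digits0145 huD] at hx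
  rcases hu.firstDigit_cases huD with h | ⟨h, hr, -⟩ | ⟨h, -⟩ | ⟨h, -⟩
  all_goals first | exact h | (rw [h] at hx; linarith)

lemma IsUniqueExpansion.head_eq_five_of_two_lt (hu : IsUniqueExpansion digits0145 (8 / 3) u)
    (huD : ∀ k, u k ∈ digits0145) (hx : 2 < expansionValue (8 / 3) u) :
    u 0 = 5 ∧ 2 < expansionValue (8 / 3) (fun k => u (k + 1)) := by
  have hr₃ := (expansionValue_mem_Icc_of_digits0145 fun k => huD (k + 1)).2
  rw [expansionValue_eq_of_digits0145 huD] at hx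
  rcases hu.firstDigit_cases huD with ⟨h, -⟩ | ⟨h, -⟩ | ⟨h, -, hr⟩ | h
  all_goals first | exact h | (rw [h] at hx; linarith)

lemma IsUniqueExpansion.eq_zero_of_lt_one (hu : IsUniqueExpansion digits0145 (8 / 3) u)
    (huD : ∀ k, u k ∈ digits0145) (hx : expansionValue (8 / 3) u < 1) : u = fun _ => 0 := by
  funext k
  induction k generalizing u with
  | zero => exact (hu.head_eq_zero_of_lt_one huD hx).1
  | succ k ih =>
    exact ih (hu.shift_digits0145 huD) (fun k => huD (k + 1)) (hu.head_eq_zero_of_lt_one huD hx).2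

lemma IsUniqueExpansion.eq_five_of_two_lt (hu : IsUniqueExpansion digits0145 (8 / 3) u)
    (huD : ∀ k, u k ∈ digits0145) (hx : 2 < expansionValue (8 / 3) u) : u = fun _ => 5 := by
  funext k
  induction k generalizing u with
  | zero => exact (hu.head_eq_five_of_two_lt huD hx).1
  | succ k ih =>
    exact ih (hu.shift_digits0145 huD) (fun k => huD (k + 1)) (hu.head_eq_five_of_two_lt huD hx).2

lemma IsUniqueExpansion.eq_zero_or_eq_five (hu : IsUniqueExpansion digits0145 (8 / 3) u)
    (huD : ∀ k, u k ∈ digits0145) : u = (fun _ => 0) ∨ u = fun _ => 5 := by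
  have hx := expansionValue_eq_of_digits0145 huD
  have hshift := hu.shift_digits0145 huD
  have hshiftD : ∀ k, u (k + 1) ∈ digits0145 := fun k => huD (k + 1)
  rcases hu.firstDigit_cases huD with ⟨h0, hr⟩ | ⟨h1, hr₂, hr₃⟩ | ⟨h4, hr₀, hr₁⟩ | ⟨h5, hr⟩
  · refine .inl (hu.eq_zero_of_lt_one huD ?_)
    rw [hx, h0]
    linarith
  · have h := congrArg (expansionValue (8 / 3)) (hshift.eq_five_of_two_lt hshiftD hr₂)
    rw [expansionValue_const (by norm_num)] at h
    norm_num at h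
    linarith
  · have h := congrArg (expansionValue (8 / 3)) (hshift.eq_zero_of_lt_one hshiftD hr₁)
    rw [expansionValue_const (by norm_num)] at h
    norm_num at h
    linarith
  · refine .inr (hu.eq_five_of_two_lt huD ?_)
    rw [hx, h5]
    linarith

end Classification

/-- over A = {0,1,4,5} in base β = 8/3, the only unique expansions are
0,0,0,… and 5,5,5,…; every other x ∈ (0, 5/(β−1)) with an expansion has at least two. -/
theorem stmt_4 :
    ∀ x : ℝ, 0 < x → x < 5 / ((8 : ℝ) / 3 - 1) →
      ∀ u : ℕ → ℝ, (∀ k, u k = 0 ∨ u k = 1 ∨ u k = 4 ∨ u k = 5) →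
        x = (∑' k : ℕ, u k / ((8 : ℝ) / 3) ^ (k + 1)) →
        u ≠ (fun _ => 0) → u ≠ (fun _ => 5) →
        ∃ v : ℕ → ℝ, (∀ k, v k = 0 ∨ v k = 1 ∨ v k = 4 ∨ v k = 5) ∧ v ≠ u ∧
          x = ∑' k : ℕ, v k / ((8 : ℝ) / 3) ^ (k + 1) := by
  intro x _ _ u hu hx hu0 hu5
  by_contra hnone
  have hunique : IsUniqueExpansion digits0145 (8 / 3) u := by
    intro v hv hval
    by_contra hne
    exact hnone ⟨v, hv, hne, hx.trans hval.symm⟩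
  rcases hunique.eq_zero_or_eq_five hu with h | h
  exacts [hu0 h, hu5 h]
end

section
/- An infinite word u = u_0 u_1 u_2 … over {0,1}, not equal to 0^ω, satisfies u_0 u_1 u_2 … ≤ u_i u_{i+1} u_{i+2} … ≤ 1 u_1 u_2 … lexicographically for all i ≥ 0 if and only if u is an S-adic word: u is a limit word of a primitive sequence of substitutions from S = {τ_h : h ≥ 0}, or u = σ(0·1^ω) or u = σ(1^ω) for some finite composition σ of substitutions in S. -/
/-!
Every `τ_h` preserves the condition `u ≤ Sⁱu ≤ 1u₁u₂…`, because `τ_h` is strictly monotone for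
the lexicographic order and every image of a letter is a block `0ᶜ1` with `h ≤ c ≤ h + 1`;
`1^ω` and `01^ω` satisfy it. The condition is closed (a failing lexicographic comparison already
fails on a finite prefix), and a primitive limit word is a limit of the words
`σ₀ ⋯ σₙ₋₁(1^ω)`, since `τ_h x` and `τ_h y` share `h` more letters than `x` and `y`.

Conversely, let `u` satisfy the condition and start with `0ʰ⁺¹1`. Comparing with `1u₁u₂…` shows
that every `1` in `u` is followed by at least `h` zeros, and comparing with `u` that it is
followed by at most `h + 1`; so `u` parses into blocks `0ʰ1` and `0ʰ⁺¹1`, i.e. `u = τ_h v`, and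
`v` satisfies the condition by monotonicity. Iterating (with `τ_h(0^ω) = τ_{h+1}(1^ω)` whenever
`v = 0^ω`) gives a sequence of substitutions; if it is not primitive, its tail is `τ₀, τ₀, …`,
and the only words satisfying the condition that are `τ₀`-images of such words at every depth
are `1^ω` and `01^ω`.
-/

def tauL (h : ℕ) (b : Bool) : List Bool :=
  if b then List.replicate h false ++ [true] else List.replicate (h + 1) false ++ [true]

def joinW (f : ℕ → List Bool) : ℕ → Bool :=
  fun n => (((List.range (n + 1)).map f).flatten).getD n false

def applyTau (h : ℕ) (u : ℕ → Bool) : ℕ → Bool :=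
  joinW fun n => tauL h (u n)

def applyComp (hs : List ℕ) (u : ℕ → Bool) : ℕ → Bool :=
  hs.foldr applyTau u

def lexLt (u v : ℕ → Bool) : Prop :=
  ∃ n, (∀ k < n, u k = v k) ∧ u n = false ∧ v n = true

def lexLe (u v : ℕ → Bool) : Prop := u = v ∨ lexLt u v

/-- u is the limit word of a primitive sequence of substitutions (τ_{hs n})_{n≥0},
primitive meaning hs n ≠ 0 for infinitely many n. -/
def IsPrimitiveLimitWord (u : ℕ → Bool) : Prop :=
  ∃ hs : ℕ → ℕ, (∀ N, ∃ n ≥ N, hs n ≠ 0) ∧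
    ∃ U : ℕ → ℕ → Bool, U 0 = u ∧ ∀ n, U n = applyTau (hs n) (U (n + 1))

open PiNat

def prepend (l : List Bool) (u : ℕ → Bool) : ℕ → Bool :=
  fun n => if hn : n < l.length then l[n] else u (n - l.length)

def shift (i : ℕ) (u : ℕ → Bool) : ℕ → Bool := fun n => u (n + i)

section Words

variable {l l₁ l₂ : List Bool} {u : ℕ → Bool}

theorem prepend_apply_of_lt {n : ℕ} (hn : n < l.length) : prepend l u n = l[n] := dif_pos hn

theorem prepend_apply_add (n : ℕ) : prepend l u (l.length + n) = u n := by
  simp [prepend]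

@[simp] theorem prepend_nil : prepend [] u = u := by
  funext n; simp [prepend]

theorem prepend_append : prepend (l₁ ++ l₂) u = prepend l₁ (prepend l₂ u) := by
  funext n
  simp only [prepend, List.length_append, List.getElem_append]
  split_ifs <;> first | rfl | omega | (congr 1; omega)

theorem shift_apply (i n : ℕ) : shift i u n = u (n + i) := rfl

@[simp] theorem shift_zero : shift 0 u = u := rfl

theorem shift_shift (i j : ℕ) : shift j (shift i u) = shift (i + j) u := by
  funext n; simp [shift, Nat.add_assoc, Nat.add_comm j i]

theorem shift_prepend_length : shift l.length (prepend l u) = u := by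
  funext n; rw [shift, Nat.add_comm, prepend_apply_add]

theorem shift_one_prepend_cons (a : Bool) : shift 1 (prepend (a :: l) u) = prepend l u := by
  rw [← List.singleton_append, prepend_append]
  exact shift_prepend_length (l := [a])

theorem eq_prepend_shift_of_forall {l : List Bool} (hl : ∀ k (hk : k < l.length), u k = l[k]) :
    u = prepend l (shift l.length u) := by
  funext n
  rcases lt_or_ge n l.length with hn | hn
  · rw [prepend_apply_of_lt hn, hl n hn]
  · obtain ⟨j, rfl⟩ := Nat.exists_eq_add_of_le hn
    rw [prepend_apply_add, shift_apply, Nat.add_comm]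

theorem prepend_true_const_true : prepend [true] (fun _ => true) = fun _ => true := by
  funext n; cases n <;> rfl

end Words

section Lex

variable {x y : ℕ → Bool}

theorem lexLt_iff_toLex_lt : lexLt x y ↔ toLex x < toLex y :=
  exists_congr fun _ => and_congr_right' Bool.lt_iff.symm

theorem lexLe_iff_toLex_le : lexLe x y ↔ toLex x ≤ toLex y := by
  rw [lexLe, lexLt_iff_toLex_lt, le_iff_eq_or_lt, toLex_inj]; rfl

theorem not_lexLe : ¬ lexLe x y ↔ lexLt y x := by
  rw [lexLe_iff_toLex_le, lexLt_iff_toLex_lt, not_le]; rfl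

theorem lexLe_iff_of_lexLt_imp {f : (ℕ → Bool) → ℕ → Bool}
    (hf : ∀ x y, lexLt x y → lexLt (f x) (f y)) : lexLe (f x) (f y) ↔ lexLe x y := by
  have hmono : StrictMono fun z : Lex (ℕ → Bool) => toLex (f (ofLex z)) := fun a b hab =>
    lexLt_iff_toLex_lt.1 (hf _ _ (lexLt_iff_toLex_lt.2 hab))
  rw [lexLe_iff_toLex_le, lexLe_iff_toLex_le]
  exact hmono.le_iff_le (a := toLex x) (b := toLex y)

theorem lexLe.apply_eq_false {c : ℕ} (hxy : lexLe x y) (hy : ∀ k < c, y k = false) :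
    ∀ k < c, x k = false := by
  intro k hk
  induction k using Nat.strong_induction_on with
  | _ k ih =>
    have hagree : ∀ j < k, x j = y j := fun j hj =>
      (ih j hj (hj.trans hk)).trans (hy j (hj.trans hk)).symm
    exact Bool.eq_false_of_le_false
      (hy k hk ▸ Pi.apply_le_of_toLex (lexLe_iff_toLex_le.1 hxy) hagree)

theorem lexLe.apply_zero_le (hxy : lexLe x y) : x 0 ≤ y 0 :=
  Pi.apply_le_of_toLex (lexLe_iff_toLex_le.1 hxy) fun _ hj => absurd hj (Nat.not_lt_zero _)

theorem lexLt.prepend {l : List Bool} (hxy : lexLt x y) : lexLt (prepend l x) (prepend l y) := by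
  obtain ⟨n, hagree, hx, hy⟩ := hxy
  refine ⟨l.length + n, fun k hk => ?_, by rw [prepend_apply_add, hx],
    by rw [prepend_apply_add, hy]⟩
  rcases lt_or_ge k l.length with hkl | hkl
  · rw [prepend_apply_of_lt hkl, prepend_apply_of_lt hkl]
  · obtain ⟨j, rfl⟩ := Nat.exists_eq_add_of_le hkl
    rw [prepend_apply_add, prepend_apply_add, hagree j (by omega)]

theorem prepend_lexLe_prepend_iff {l : List Bool} :
    lexLe (prepend l x) (prepend l y) ↔ lexLe x y :=
  lexLe_iff_of_lexLt_imp fun _ _ => lexLt.prepend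

theorem lexLt_prepend_replicate {c : ℕ} (hx : ∀ k ≤ c, x k = false) (s : ℕ → Bool) :
    lexLt x (prepend (List.replicate c false ++ [true]) s) := by
  refine ⟨c, fun k hk => ?_, hx c le_rfl, ?_⟩
  · rw [hx k hk.le, prepend_apply_of_lt (by simp; omega)]
    simp [List.getElem_append_left (by simpa using hk : k < (List.replicate c false).length)]
  · rw [prepend_apply_of_lt (by simp)]
    simp

theorem lexLt_of_apply_zero (hx : x 0 = false) (hy : y 0 = true) : lexLt x y :=
  ⟨0, fun _ hk => absurd hk (Nat.not_lt_zero _), hx, hy⟩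

end Lex

section Cylinder

variable {x y : ℕ → Bool}

theorem prepend_mem_cylinder {l : List Bool} {k : ℕ} (h : x ∈ cylinder y k) :
    prepend l x ∈ cylinder (prepend l y) (l.length + k) := by
  rw [mem_cylinder_iff] at h ⊢
  intro j hj
  rcases lt_or_ge j l.length with hjl | hjl
  · rw [prepend_apply_of_lt hjl, prepend_apply_of_lt hjl]
  · obtain ⟨j, rfl⟩ := Nat.exists_eq_add_of_le hjl
    rw [prepend_apply_add, prepend_apply_add, h j (by omega)]

theorem shift_mem_cylinder {i k : ℕ} (h : x ∈ cylinder y (k + i)) :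
    shift i x ∈ cylinder (shift i y) k :=
  mem_cylinder_iff.2 fun j hj => mem_cylinder_iff.1 h (j + i) (by omega)

theorem lexLt.exists_forall_mem_cylinder (hxy : lexLt x y) :
    ∃ n, ∀ x' ∈ cylinder x n, ∀ y' ∈ cylinder y n, lexLt x' y' := by
  obtain ⟨n, hagree, hx, hy⟩ := hxy
  refine ⟨n + 1, fun x' hx' y' hy' => ⟨n, fun k hk => ?_, ?_, ?_⟩⟩ <;>
    simp only [mem_cylinder_iff] at hx' hy'
  · rw [hx' k (by omega), hy' k (by omega), hagree k hk]
  · rw [hx' n (by omega), hx]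
  · rw [hy' n (by omega), hy]

end Cylinder

section Join

variable {g : ℕ → List Bool}

theorem flatten_range_getD_eq_joinW (hg : ∀ k, g k ≠ []) {n m : ℕ} (hnm : n < m) :
    (((List.range m).map g).flatten).getD n false = joinW g n := by
  have hlen : ∀ t, t ≤ (((List.range t).map g).flatten).length := by
    intro t
    induction t with
    | zero => simp
    | succ t ih =>
      simp only [List.range_succ, List.map_append, List.flatten_append, List.length_append,
        List.map_cons, List.map_nil, List.flatten_cons, List.flatten_nil, List.append_nil]
      have := List.length_pos_iff.2 (hg t)
      omega
  obtain ⟨d, rfl⟩ := Nat.exists_eq_add_of_lt hnm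
  rw [show n + d + 1 = (n + 1) + d by omega, List.range_add, List.map_append, List.flatten_append,
    List.getD_append _ _ _ _ (lt_of_lt_of_le n.lt_succ_self (hlen _)), joinW]

theorem joinW_eq_prepend (hg : ∀ k, g k ≠ []) :
    joinW g = prepend (g 0) (joinW fun k => g (k + 1)) := by
  funext n
  have hsplit : ((List.range (n + 1)).map g).flatten
      = g 0 ++ ((List.range n).map (fun k => g (k + 1))).flatten := by
    simp [List.range_succ_eq_map, Function.comp_def]
  rw [joinW, hsplit]
  rcases lt_or_ge n (g 0).length with hn | hn
  · rw [List.getD_append _ _ _ _ hn, prepend_apply_of_lt hn, List.getD_eq_getElem]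
  · obtain ⟨j, rfl⟩ := Nat.exists_eq_add_of_le hn
    have := List.length_pos_iff.2 (hg 0)
    rw [List.getD_append_right _ _ _ _ hn, prepend_apply_add, Nat.add_sub_cancel_left,
      flatten_range_getD_eq_joinW (fun k => hg (k + 1)) (by omega)]

theorem eq_joinW_of_forall_eq_prepend (hg : ∀ k, g k ≠ []) {W : ℕ → ℕ → Bool}
    (hW : ∀ k, W k = prepend (g k) (W (k + 1))) (k : ℕ) : W k = joinW fun j => g (j + k) := by
  funext n
  induction n using Nat.strong_induction_on generalizing k with
  | _ n ih =>
    rw [hW k, joinW_eq_prepend fun j => hg (j + k)]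
    rcases lt_or_ge n (g k).length with hn | hn
    · rw [prepend_apply_of_lt hn, prepend_apply_of_lt (by simpa using hn)]
      simp only [zero_add]
    · obtain ⟨j, rfl⟩ := Nat.exists_eq_add_of_le hn
      have := List.length_pos_iff.2 (hg k)
      rw [prepend_apply_add, ih j (by omega) (k + 1), zero_add, prepend_apply_add]
      simp only [Nat.add_right_comm _ 1 k, Nat.add_assoc]

theorem exists_shift_joinW_eq (hg : ∀ k, g k ≠ []) (i : ℕ) :
    ∃ m r, r < (g m).length ∧
      shift i (joinW g) = prepend ((g m).drop r) (joinW fun j => g (j + (m + 1))) := by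
  induction i with
  | zero => exact ⟨0, 0, List.length_pos_iff.2 (hg 0), joinW_eq_prepend hg⟩
  | succ i ih =>
    obtain ⟨m, r, hr, hi⟩ := ih
    rw [← shift_shift, hi, List.drop_eq_getElem_cons hr, shift_one_prepend_cons]
    rcases lt_or_ge (r + 1) (g m).length with hr' | hr'
    · exact ⟨m, r + 1, hr', rfl⟩
    · refine ⟨m + 1, 0, List.length_pos_iff.2 (hg (m + 1)), ?_⟩
      rw [List.drop_eq_nil_of_le hr', prepend_nil, List.drop_zero,
        joinW_eq_prepend fun j => hg (j + (m + 1))]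
      simp only [zero_add, Nat.add_comm 1, Nat.add_assoc]

end Join

section Tau

variable {h : ℕ} {x y : ℕ → Bool}

theorem tauL_eq (h : ℕ) (b : Bool) :
    tauL h b = List.replicate (h + (!b).toNat) false ++ [true] := by
  cases b <;> rfl

theorem tauL_ne_nil (h : ℕ) (b : Bool) : tauL h b ≠ [] := by
  simp [tauL_eq]

theorem tauL_getElem (h : ℕ) (b : Bool) {k : ℕ} (hk : k < (tauL h b).length) :
    (tauL h b)[k] = decide (k = h + (!b).toNat) := by
  simp only [tauL_eq, List.getElem_append, List.getElem_replicate, List.length_replicate]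
  split_ifs with hk'
  · simp; omega
  · simp [tauL_eq] at hk; simp; omega

theorem tauL_drop {b : Bool} {r : ℕ} (hr : r < (tauL h b).length) :
    (tauL h b).drop r = List.replicate (h + (!b).toNat - r) false ++ [true] := by
  rw [tauL_eq] at hr ⊢
  rw [List.drop_append_of_le_length (by simp at hr ⊢; omega), List.drop_replicate]

theorem applyTau_eq_prepend (h : ℕ) (x : ℕ → Bool) :
    applyTau h x = prepend (tauL h (x 0)) (applyTau h (shift 1 x)) :=
  joinW_eq_prepend fun k => tauL_ne_nil h (x k)

theorem applyTau_shift_eq_prepend (h m : ℕ) (x : ℕ → Bool) :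
    applyTau h (shift m x) = prepend (tauL h (x m)) (applyTau h (shift (m + 1) x)) := by
  rw [applyTau_eq_prepend, shift_shift, shift_apply, zero_add]

theorem applyTau_eq_replicate_prepend (h : ℕ) (x : ℕ → Bool) :
    applyTau h x =
      prepend (List.replicate h false) (prepend (tauL 0 (x 0)) (applyTau h (shift 1 x))) := by
  rw [applyTau_eq_prepend, ← prepend_append]
  congr 1
  cases x 0 <;> simp [tauL_eq, List.replicate_add]

theorem applyTau_apply_of_lt {j : ℕ} (hj : j < h) : applyTau h x j = false := by
  rw [applyTau_eq_replicate_prepend, prepend_apply_of_lt (by simpa using hj)]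
  simp

theorem applyTau_apply_self : applyTau h x h = x 0 := by
  have := prepend_apply_add (l := List.replicate h false)
    (u := prepend (tauL 0 (x 0)) (applyTau h (shift 1 x))) 0
  rw [List.length_replicate, add_zero, ← applyTau_eq_replicate_prepend,
    prepend_apply_of_lt (by simp [tauL_eq])] at this
  rw [this]
  cases x 0 <;> simp [tauL]

theorem shift_one_applyTau_of_apply_zero (hx : x 0 = false) :
    shift 1 (applyTau h x) = applyTau h (prepend [true] (shift 1 x)) := by
  rw [applyTau_eq_prepend h x, hx, applyTau_eq_prepend h (prepend _ _)]
  exact shift_one_prepend_cons false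

theorem exists_shift_applyTau_eq (h : ℕ) (x : ℕ → Bool) (i : ℕ) :
    ∃ m r, r < (tauL h (x m)).length ∧
      shift i (applyTau h x) = prepend ((tauL h (x m)).drop r) (applyTau h (shift (m + 1) x)) :=
  exists_shift_joinW_eq (fun k => tauL_ne_nil h (x k)) i

theorem lexLt.applyTau (hxy : lexLt x y) : lexLt (applyTau h x) (applyTau h y) := by
  obtain ⟨n, hagree, hx, hy⟩ := hxy
  induction n generalizing x y with
  | zero =>
    rw [applyTau_eq_prepend h y, hy, tauL_eq, Bool.not_true, Bool.toNat_false, add_zero]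
    refine lexLt_prepend_replicate (fun k hk => ?_) _
    rcases hk.lt_or_eq with hk | rfl
    · exact applyTau_apply_of_lt hk
    · rw [applyTau_apply_self, hx]
  | succ n ih =>
    rw [applyTau_eq_prepend h x, applyTau_eq_prepend h y, hagree 0 n.succ_pos]
    exact (ih (fun k hk => hagree (k + 1) (by omega)) hx hy).prepend

theorem applyTau_lexLe_applyTau_iff : lexLe (applyTau h x) (applyTau h y) ↔ lexLe x y :=
  lexLe_iff_of_lexLt_imp fun _ _ => lexLt.applyTau

theorem applyTau_mem_cylinder {k : ℕ} (hxy : x ∈ cylinder y k) :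
    applyTau h x ∈ cylinder (applyTau h y) (k + h) := by
  induction k generalizing x y with
  | zero =>
    rw [applyTau_eq_replicate_prepend h x, applyTau_eq_replicate_prepend h y]
    simpa using prepend_mem_cylinder (l := List.replicate h false) (k := 0)
      (x := prepend (tauL 0 (x 0)) (applyTau h (shift 1 x)))
      (y := prepend (tauL 0 (y 0)) (applyTau h (shift 1 y))) (by simp)
  | succ k ih =>
    rw [applyTau_eq_prepend h x, applyTau_eq_prepend h y, mem_cylinder_iff.1 hxy 0 k.succ_pos]
    refine cylinder_anti _ ?_ (prepend_mem_cylinder (ih (shift_mem_cylinder hxy)))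
    have := List.length_pos_iff.2 (tauL_ne_nil h (y 0))
    omega

theorem applyTau_const_false (h : ℕ) :
    applyTau h (fun _ => false) = applyTau (h + 1) fun _ => true :=
  rfl

theorem applyTau_zero_const_true : applyTau 0 (fun _ => true) = fun _ => true :=
  (eq_joinW_of_forall_eq_prepend (fun _ => List.cons_ne_nil true []) (W := fun _ _ => true)
    (fun _ => by funext n; cases n <;> rfl) 0).symm

end Tau

def IsShiftBounded (u : ℕ → Bool) : Prop :=
  ∀ i, lexLe u (shift i u) ∧ lexLe (shift i u) (prepend [true] (shift 1 u))

section ShiftBounded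

variable {h : ℕ} {u v : ℕ → Bool}

theorem isShiftBounded_const_true : IsShiftBounded fun _ => true := fun _ =>
  ⟨Or.inl rfl, Or.inl prepend_true_const_true.symm⟩

theorem isShiftBounded_const_false : IsShiftBounded fun _ => false := fun _ =>
  ⟨Or.inl rfl, Or.inr (lexLt_of_apply_zero rfl rfl)⟩

theorem isShiftBounded_false_prepend_const_true :
    IsShiftBounded (prepend [false] fun _ => true) := by
  intro i
  rcases i with _ | i
  · exact ⟨Or.inl rfl, Or.inr (lexLt_of_apply_zero rfl rfl)⟩
  · have hshift : ∀ j, shift (j + 1) (prepend [false] fun _ => true) = fun _ => true :=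
      fun _ => rfl
    rw [hshift, hshift 0, prepend_true_const_true]
    exact ⟨Or.inr (lexLt_of_apply_zero rfl rfl), Or.inl rfl⟩

theorem IsShiftBounded.eq_const_true (hu : IsShiftBounded u) (hu0 : u 0 = true) :
    u = fun _ => true := by
  funext i
  have := (hu i).1.apply_zero_le
  rw [hu0, shift_apply, zero_add] at this
  exact Bool.eq_true_of_true_le this

theorem isShiftBounded_applyTau_of_apply_zero (hv : IsShiftBounded v) (hv0 : v 0 = false) :
    IsShiftBounded (applyTau h v) := by
  have hhead : ∀ k ≤ h, applyTau h v k = false := fun k hk => by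
    rcases hk.lt_or_eq with hk | rfl
    · exact applyTau_apply_of_lt hk
    · rw [applyTau_apply_self, hv0]
  intro i
  obtain ⟨m, r, hr, hi⟩ := exists_shift_applyTau_eq h v i
  have hc : h + (!v m).toNat ≤ h + 1 := by cases v m <;> simp
  rw [tauL_drop hr] at hi
  rw [tauL_eq] at hr
  simp only [List.length_append, List.length_replicate, List.length_singleton] at hr
  constructor
  · by_cases hlow : h + (!v m).toNat - r ≤ h
    · rw [hi]
      exact Or.inr (lexLt_prepend_replicate (fun k hk => hhead k (by omega)) _)
    · have hr0 : r = 0 := by omega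
      have hvm : v m = false := by cases hvm : v m <;> simp_all
      rw [hi, hr0, Nat.sub_zero, ← tauL_eq, ← applyTau_shift_eq_prepend]
      exact applyTau_lexLe_applyTau_iff.2 (hv m).1
  · rw [shift_one_applyTau_of_apply_zero hv0, hi]
    rcases hcr : h + (!v m).toNat - r with _ | c
    · rw [List.replicate_zero, List.nil_append, prepend_lexLe_prepend_iff,
        applyTau_lexLe_applyTau_iff]
      exact (hv (m + 1)).2
    · refine Or.inr (lexLt_of_apply_zero ?_ rfl)
      rw [prepend_apply_of_lt (by simp)]
      simp [List.replicate_succ]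

theorem isShiftBounded_applyTau (hv : IsShiftBounded v) : IsShiftBounded (applyTau h v) := by
  cases hv0 : v 0
  · exact isShiftBounded_applyTau_of_apply_zero hv hv0
  · rw [hv.eq_const_true hv0]
    cases h with
    | zero => rw [applyTau_zero_const_true]; exact isShiftBounded_const_true
    | succ h =>
      rw [← applyTau_const_false]
      exact isShiftBounded_applyTau_of_apply_zero isShiftBounded_const_false rfl

theorem isShiftBounded_applyComp (hv : IsShiftBounded v) (hs : List ℕ) :
    IsShiftBounded (applyComp hs v) := by
  induction hs with
  | nil => exact hv
  | cons h hs ih => exact isShiftBounded_applyTau ih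

end ShiftBounded

section Limit

variable {u x y : ℕ → Bool}

theorem isShiftBounded_of_forall_mem_cylinder
    (happrox : ∀ n, ∃ w, IsShiftBounded w ∧ w ∈ cylinder u n) : IsShiftBounded u := by
  intro i
  by_contra hcon
  rw [not_and_or, not_lexLe, not_lexLe] at hcon
  rcases hcon with hlt | hlt
  · obtain ⟨n, hn⟩ := hlt.exists_forall_mem_cylinder
    obtain ⟨w, hw, hwu⟩ := happrox (n + i)
    exact not_lexLe.2 (hn _ (shift_mem_cylinder hwu) _ (cylinder_anti _ (by omega) hwu)) (hw i).1
  · obtain ⟨n, hn⟩ := hlt.exists_forall_mem_cylinder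
    obtain ⟨w, hw, hwu⟩ := happrox (n + i + 1)
    have hone : prepend [true] (shift 1 w) ∈ cylinder (prepend [true] (shift 1 u)) n :=
      cylinder_anti _ (by simp) (prepend_mem_cylinder
        (shift_mem_cylinder (k := n) (cylinder_anti _ (by omega) hwu)))
    exact not_lexLe.2
      (hn _ hone _ (shift_mem_cylinder (cylinder_anti _ (by omega) hwu))) (hw i).2

theorem applyComp_mem_cylinder {k : ℕ} (hxy : x ∈ cylinder y k) (hs : List ℕ) :
    applyComp hs x ∈ cylinder (applyComp hs y) (k + hs.sum) := by
  induction hs with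
  | nil => exact hxy
  | cons h hs ih =>
    refine cylinder_anti _ (by simp; omega) (applyTau_mem_cylinder (h := h) ih)

theorem applyComp_range_eq {hs : ℕ → ℕ} {U : ℕ → ℕ → Bool}
    (hU : ∀ n, U n = applyTau (hs n) (U (n + 1))) (n : ℕ) :
    U 0 = applyComp ((List.range n).map hs) (U n) := by
  induction n with
  | zero => rfl
  | succ n ih =>
    rw [ih, hU n, List.range_succ, List.map_append, applyComp, applyComp, List.foldr_append]
    rfl

theorem exists_le_sum_range {hs : ℕ → ℕ} (hprim : ∀ N, ∃ n ≥ N, hs n ≠ 0) (L : ℕ) :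
    ∃ n, L ≤ ((List.range n).map hs).sum := by
  have hmono : Monotone fun n => ((List.range n).map hs).sum :=
    monotone_nat_of_le_succ fun n => by rw [List.sum_range_succ]; omega
  induction L with
  | zero => exact ⟨0, Nat.zero_le _⟩
  | succ L ih =>
    obtain ⟨n, hn⟩ := ih
    obtain ⟨m, hm, hm0⟩ := hprim n
    refine ⟨m + 1, ?_⟩
    have := hmono hm
    simp only at this
    rw [List.sum_range_succ]
    omega

theorem IsPrimitiveLimitWord.isShiftBounded (hu : IsPrimitiveLimitWord u) : IsShiftBounded u := by
  obtain ⟨hs, hprim, U, rfl, hU⟩ := hu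
  refine isShiftBounded_of_forall_mem_cylinder fun L => ?_
  obtain ⟨n, hn⟩ := exists_le_sum_range hprim L
  refine ⟨applyComp ((List.range n).map hs) fun _ => true,
    isShiftBounded_applyComp isShiftBounded_const_true _, ?_⟩
  rw [applyComp_range_eq hU n]
  exact cylinder_anti _ (by omega) (applyComp_mem_cylinder (k := 0) (y := U n) (by simp) _)

end Limit

section Desubstitution

variable {h : ℕ} {u : ℕ → Bool}

theorem exists_eq_applyTau_of_forall_mem (S : Set ℕ) (h0 : 0 ∈ S)
    (hS : ∀ i ∈ S, ∃ b, i + (tauL h b).length ∈ S ∧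
      shift i u = prepend (tauL h b) (shift (i + (tauL h b).length) u)) :
    ∃ v : ℕ → Bool, ∃ pos : ℕ → ℕ, pos 0 = 0 ∧
      ∀ m, pos m ∈ S ∧ shift (pos m) u = applyTau h (shift m v) := by
  choose! b hbS hbu using hS
  set pos : ℕ → ℕ := fun m => (fun i => i + (tauL h (b i)).length)^[m] 0
  have hpos_succ : ∀ m, pos (m + 1) = pos m + (tauL h (b (pos m))).length := fun m =>
    Function.iterate_succ_apply' _ m 0
  have hpos : ∀ m, pos m ∈ S := fun m => by
    induction m with
    | zero => exact h0
    | succ m ih => rw [hpos_succ]; exact hbS _ ih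
  refine ⟨fun m => b (pos m), pos, rfl, fun m => ⟨hpos m, ?_⟩⟩
  exact eq_joinW_of_forall_eq_prepend (fun k => tauL_ne_nil h _) (W := fun k => shift (pos k) u)
    (fun k => by simp only [hpos_succ]; exact hbu _ (hpos k)) m

theorem IsShiftBounded.shift_succ_lexLe (hu : IsShiftBounded u) {j : ℕ} (hj : u j = true) :
    lexLe (shift (j + 1) u) (shift 1 u) := by
  have hsplit : shift j u = prepend [true] (shift (j + 1) u) := by
    rw [eq_prepend_shift_of_forall (u := shift j u) (l := [true]) (fun k hk => by
      obtain rfl : k = 0 := by simpa using hk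
      rw [shift_apply, zero_add, hj]; rfl), shift_shift, List.length_singleton]
  have := (hu j).2
  rwa [hsplit, prepend_lexLe_prepend_iff] at this

theorem IsShiftBounded.exists_shift_eq_prepend_tauL (hu : IsShiftBounded u)
    (hlt : ∀ k < h + 1, u k = false) (ha : u (h + 1) = true) {i : ℕ}
    (hi : lexLe (shift i u) (shift 1 u)) :
    ∃ b, lexLe (shift (i + (tauL h b).length) u) (shift 1 u) ∧
      shift i u = prepend (tauL h b) (shift (i + (tauL h b).length) u) := by
  have hzero : ∀ t < h, u (t + i) = false :=
    hi.apply_eq_false fun k hk => hlt (k + 1) (by omega)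
  have hone : u (h + i) = true ∨ u (h + 1 + i) = true := by
    by_contra hcon
    simp only [not_or, Bool.not_eq_true] at hcon
    refine not_lexLe.2 ⟨h + 1, fun k hk => ?_, hcon.2, ha⟩ (hu i).1
    rcases (Nat.lt_succ_iff.1 hk).lt_or_eq with hk | rfl
    · rw [shift_apply, hzero k hk, hlt k (by omega)]
    · rw [shift_apply, hcon.1, hlt k (by omega)]
  refine ⟨u (h + i), ?_, ?_⟩
  · have hlast : u (h + (!u (h + i)).toNat + i) = true := by
      cases hb : u (h + i) <;> simp_all
    have := hu.shift_succ_lexLe hlast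
    rwa [tauL_eq, List.length_append, List.length_replicate, List.length_singleton,
      show i + (h + (!u (h + i)).toNat + 1) = h + (!u (h + i)).toNat + i + 1 by omega]
  · rw [← shift_shift, ← eq_prepend_shift_of_forall]
    intro k hk
    rw [tauL_getElem, shift_apply]
    rw [tauL_eq] at hk
    simp only [List.length_append, List.length_replicate, List.length_singleton] at hk
    rcases lt_trichotomy k h with hkh | rfl | hkh
    · rw [hzero k hkh]; simp; omega
    · cases hb : u (k + i) <;> simp
    · have hb : u (h + i) = false := by
        cases hb : u (h + i)
        · rfl
        · simp [hb] at hk; omega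
      obtain rfl : k = h + 1 := by simp [hb] at hk; omega
      simp [hb, hone.resolve_left (by simp [hb])]

theorem IsShiftBounded.exists_eq_applyTau_of_apply_zero (hu : IsShiftBounded u)
    (hu0 : u 0 = false) (hne : ∃ j, u j = true) :
    ∃ h v, u = applyTau h v ∧ IsShiftBounded v := by
  classical
  obtain ⟨a, ha, hlt⟩ : ∃ a, u a = true ∧ ∀ k < a, u k = false :=
    ⟨Nat.find hne, Nat.find_spec hne, fun k hk => by simpa using Nat.find_min hne hk⟩
  obtain ⟨h, rfl⟩ : ∃ h, a = h + 1 := Nat.exists_eq_succ_of_ne_zero (by rintro rfl; simp_all)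
  obtain ⟨v, pos, hpos0, hpos⟩ :=
    exists_eq_applyTau_of_forall_mem {i | lexLe (shift i u) (shift 1 u)} (hu 1).1
      fun _ hi => hu.exists_shift_eq_prepend_tauL hlt ha hi
  have huv : u = applyTau h v := by simpa [hpos0] using (hpos 0).2
  have hv0 : v 0 = false := by
    rw [← applyTau_apply_self (h := h) (x := v), ← huv, hlt h h.lt_succ_self]
  refine ⟨h, v, huv, fun m => ⟨?_, ?_⟩⟩
  · rw [← applyTau_lexLe_applyTau_iff (h := h), ← (hpos m).2, ← huv]
    exact (hu _).1
  · rw [← applyTau_lexLe_applyTau_iff (h := h), ← (hpos m).2,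
      ← shift_one_applyTau_of_apply_zero hv0, ← huv]
    exact (hpos m).1

theorem IsShiftBounded.exists_eq_applyTau (hu : IsShiftBounded u) (hne : u ≠ fun _ => false) :
    ∃ h v, u = applyTau h v ∧ IsShiftBounded v ∧ v ≠ fun _ => false := by
  have hones : (fun _ : ℕ => true) ≠ fun _ => false := fun h => by simpa using congrFun h 0
  cases hu0 : u 0
  · have hex : ∃ j, u j = true := by
      by_contra hcon
      exact hne (funext fun j => by simpa using not_exists.1 hcon j)
    obtain ⟨h, v, huv, hv⟩ := hu.exists_eq_applyTau_of_apply_zero hu0 hex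
    by_cases hv0 : v = fun _ => false
    · exact ⟨h + 1, fun _ => true, by rw [huv, hv0, applyTau_const_false],
        isShiftBounded_const_true, hones⟩
    · exact ⟨h, v, huv, hv, hv0⟩
  · exact ⟨0, fun _ => true, by rw [hu.eq_const_true hu0, applyTau_zero_const_true],
      isShiftBounded_const_true, hones⟩

end Desubstitution

theorem applyTau_zero_mem_cylinder {x : ℕ → Bool} {k : ℕ}
    (hx : x ∈ cylinder (prepend [false] fun _ => true) (k + 1)) :
    applyTau 0 x ∈ cylinder (prepend [false] fun _ => true) (k + 2) := by
  have hx0 : x 0 = false := mem_cylinder_iff.1 hx 0 k.succ_pos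
  have htail := applyTau_mem_cylinder (h := 0) (shift_mem_cylinder (i := 1) hx)
  rw [show shift 1 (prepend [false] fun _ => true) = fun _ => true from rfl,
    applyTau_zero_const_true] at htail
  have hw : prepend [false, true] (fun _ => true) = prepend [false] fun _ => true := by
    rw [← List.singleton_append, prepend_append, prepend_true_const_true]
  rw [applyTau_eq_prepend, hx0, ← hw]
  exact cylinder_anti _ (by simp; omega) (prepend_mem_cylinder (l := [false, true]) htail)

theorem eq_const_true_of_applyTau_zero {U : ℕ → ℕ → Bool}
    (hU : ∀ n, U n = applyTau 0 (U (n + 1))) {n : ℕ} (hn : U n = fun _ => true) :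
    U 0 = fun _ => true := by
  induction n generalizing U with
  | zero => exact hn
  | succ n ih => rw [hU 0, ih (U := fun k => U (k + 1)) (fun k => hU (k + 1)) hn,
      applyTau_zero_const_true]

theorem eq_const_true_or_of_applyTau_zero {U : ℕ → ℕ → Bool}
    (hU : ∀ n, U n = applyTau 0 (U (n + 1))) (hb : ∀ n, IsShiftBounded (U n)) :
    (U 0 = fun _ => true) ∨ U 0 = prepend [false] fun _ => true := by
  by_cases hhead : ∃ n, U n 0 = true
  · obtain ⟨n, hn⟩ := hhead
    exact Or.inl (eq_const_true_of_applyTau_zero hU ((hb n).eq_const_true hn))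
  · have hcyl : ∀ k n, U n ∈ cylinder (prepend [false] fun _ => true) (k + 1) := by
      intro k
      induction k with
      | zero =>
        refine fun n => mem_cylinder_iff.2 fun j hj => ?_
        obtain rfl : j = 0 := by omega
        exact (Bool.eq_false_iff.2 (not_exists.1 hhead n)).trans rfl
      | succ k ih => exact fun n => hU n ▸ applyTau_zero_mem_cylinder (ih (n + 1))
    exact Or.inr (funext fun j => mem_cylinder_iff.1 (hcyl j 0) j j.lt_succ_self)

theorem IsShiftBounded.isPrimitiveLimitWord_or {u : ℕ → Bool} (hu : IsShiftBounded u)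
    (hne : u ≠ fun _ => false) :
    IsPrimitiveLimitWord u ∨ (∃ hs : List ℕ, u = applyComp hs (prepend [false] fun _ => true)) ∨
      ∃ hs : List ℕ, u = applyComp hs fun _ => true := by
  choose! H V hHV using fun w (hw : IsShiftBounded w ∧ w ≠ fun _ => false) =>
    hw.1.exists_eq_applyTau hw.2
  set U : ℕ → ℕ → Bool := fun n => V^[n] u
  have hUsucc : ∀ n, U (n + 1) = V (U n) := fun n => Function.iterate_succ_apply' V n u
  have hP : ∀ n, IsShiftBounded (U n) ∧ U n ≠ fun _ => false := fun n => by
    induction n with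
    | zero => exact ⟨hu, hne⟩
    | succ n ih => rw [hUsucc]; exact (hHV _ ih).2
  have hU : ∀ n, U n = applyTau (H (U n)) (U (n + 1)) := fun n => by
    rw [hUsucc]; exact (hHV _ (hP n)).1
  by_cases hprim : ∀ N, ∃ n ≥ N, H (U n) ≠ 0
  · exact Or.inl ⟨_, hprim, U, rfl, hU⟩
  push Not at hprim
  obtain ⟨N, hN⟩ := hprim
  have hcomp := applyComp_range_eq hU N
  have hU0 : ∀ n, U (n + N) = applyTau 0 (U (n + 1 + N)) := fun n => by
    rw [hU, hN _ (by omega), Nat.add_right_comm]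
  rcases eq_const_true_or_of_applyTau_zero (U := fun n => U (n + N)) hU0 fun n => (hP _).1
    with hN1 | hN1 <;> simp only [zero_add] at hN1 <;> rw [hN1] at hcomp
  · exact Or.inr (Or.inr ⟨_, hcomp⟩)
  · exact Or.inr (Or.inl ⟨_, hcomp⟩)

/-- a nonzero infinite binary word satisfies
u ≤ σ^i(u) ≤ 1u_1u_2… (lexicographically, for all shifts i) iff it is an S-adic word:
a primitive limit word, or σ(0·1^ω) or σ(1^ω) for a finite composition σ. -/
theorem stmt_7 (u : ℕ → Bool) (hu : u ≠ fun _ => false) :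
    (∀ i : ℕ, lexLe u (fun n => u (n + i)) ∧
        lexLe (fun n => u (n + i)) (fun n => if n = 0 then true else u n))
    ↔ (IsPrimitiveLimitWord u ∨
        (∃ hs : List ℕ, u = applyComp hs fun n => decide (0 < n)) ∨
        (∃ hs : List ℕ, u = applyComp hs fun _ => true)) := by
  have hone : (fun n => if n = 0 then true else u n) = prepend [true] (shift 1 u) := by
    funext n; cases n <;> rfl
  have hzero_ones : (fun n => decide (0 < n)) = prepend [false] fun _ => true := by
    funext n; cases n <;> rfl
  rw [hone, hzero_ones]
  refine ⟨fun hb => IsShiftBounded.isPrimitiveLimitWord_or hb hu, ?_⟩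
  rintro (hp | ⟨hs, rfl⟩ | ⟨hs, rfl⟩)
  · exact hp.isShiftBounded
  · exact isShiftBounded_applyComp isShiftBounded_false_prepend_const_true hs
  · exact isShiftBounded_applyComp isShiftBounded_const_true hs
end

section
/- Let m ∈ (1,2], β ∈ [m, m+1], and u = u_0 u_1 … ∈ {0,1}^ℕ, u ≠ 0^ω. Then u is the unique β-expansion of its value over the alphabet {0,1,m} if and only if for every i ≥ 0 with u_i = 1 one has m/(β−1) < 1 + Σ_{k≥1} u_{i+k} β^{-k} < m. -/
/-!
Write `π(v) = ∑ v k / β ^ (k + 1)` and `M = m / (β - 1)` for the largest value over `{0, 1, m}`.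
Since `β ≤ m + 1` and `m ≤ 2`, the digit intervals `[d / β, (d + M) / β]`, `d ∈ {0, 1, m}`, cover
`[0, M]`, so greedy digit choice expands every point of `[0, M]`.

If `u` is a unique expansion, `u i = 1` and `t` is the value of the tail after `i`, then neither
`1 + t` nor `1 + t - m` may lie in `[0, M]`: otherwise digit `i` could be changed to `0`, resp. `m`,
and the tail re-expanded. These are the two inequalities. Conversely, at the first index `i` where
another expansion `v` differs from `u`, we get `v i + t_v = u i + t_u` with `t_v ∈ [0, M]`. For
`u i = 1` the inequalities exclude this; for `u i = 0` it would force `t_u ≥ 1`, while the upper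
inequality together with `m ≤ β` keeps every tail value of `u` below `1`.
-/

open Set Filter Topology

namespace BetaExpansion

noncomputable def expansionValue (β : ℝ) (v : ℕ → ℝ) : ℝ := ∑' k, v k / β ^ (k + 1)

def IsUniqueExpansion (m β : ℝ) (u : ℕ → ℝ) : Prop :=
  ∀ v : ℕ → ℝ, (∀ k, v k ∈ ({0, 1, m} : Set ℝ)) →
    expansionValue β v = expansionValue β u → v = u

lemma digits_subset_Icc {m : ℝ} (hm : 1 ≤ m) : ({0, 1, m} : Set ℝ) ⊆ Icc 0 m := by
  rintro x (rfl | rfl | rfl) <;> simp <;> linarith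

lemma binaryDigits_subset_Icc : ({0, 1} : Set ℝ) ⊆ Icc 0 1 := by
  rintro x (rfl | rfl) <;> simp

lemma binaryDigits_subset_digits (m : ℝ) : ({0, 1} : Set ℝ) ⊆ {0, 1, m} := by
  rintro x (rfl | rfl) <;> simp

section Value

variable {β C D : ℝ} {v w : ℕ → ℝ}

lemma hasSum_const_div_pow (hβ : 1 < β) (c : ℝ) :
    HasSum (fun k : ℕ => c / β ^ (k + 1)) (c / (β - 1)) := by
  have hβ0 : 0 < β := one_pos.trans hβ
  have hβ1 : β - 1 ≠ 0 := (sub_pos.2 hβ).ne'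
  have hf : (fun k : ℕ => c / β ^ (k + 1)) = fun k => c / β * β⁻¹ ^ k := by
    ext k
    rw [inv_pow, pow_succ]
    field_simp
  have hsum : c / (β - 1) = c / β * (1 - β⁻¹)⁻¹ := by
    field_simp
  rw [hf, hsum]
  exact (hasSum_geometric_of_lt_one (inv_nonneg.2 hβ0.le) (inv_lt_one_of_one_lt₀ hβ)).mul_left _

lemma summable_expansion (hβ : 1 < β) (hv : ∀ k, v k ∈ Icc 0 C) :
    Summable fun k => v k / β ^ (k + 1) :=
  (hasSum_const_div_pow hβ C).summable.of_nonneg_of_le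
    (fun k => div_nonneg (hv k).1 (pow_pos (one_pos.trans hβ) _).le)
    (fun k => div_le_div_of_nonneg_right (hv k).2 (pow_pos (one_pos.trans hβ) _).le)

lemma expansionValue_mem_Icc (hβ : 1 < β) (hv : ∀ k, v k ∈ Icc 0 C) :
    expansionValue β v ∈ Icc 0 (C / (β - 1)) :=
  ⟨tsum_nonneg fun k => div_nonneg (hv k).1 (pow_pos (one_pos.trans hβ) _).le,
    hasSum_le (fun k => div_le_div_of_nonneg_right (hv k).2 (pow_pos (one_pos.trans hβ) _).le)
      (summable_expansion hβ hv).hasSum (hasSum_const_div_pow hβ C)⟩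

lemma expansionValue_eq_sum_add_tail (hβ : 1 < β) (hv : ∀ k, v k ∈ Icc 0 C) (n : ℕ) :
    expansionValue β v = ∑ k ∈ Finset.range n, v k / β ^ (k + 1) +
      expansionValue β (fun k => v (n + k)) / β ^ n := by
  rw [expansionValue, ← (summable_expansion hβ hv).sum_add_tsum_nat_add n, expansionValue,
    ← tsum_div_const]
  congr 1
  refine tsum_congr fun k => ?_
  rw [add_comm k n, div_div, ← pow_add]
  ring_nf

lemma expansionValue_tail_eq (hβ : 1 < β) (hv : ∀ k, v k ∈ Icc 0 C) (n : ℕ) :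
    expansionValue β (fun k => v (n + k)) =
      (v n + expansionValue β (fun k => v (n + 1 + k))) / β := by
  rw [expansionValue_eq_sum_add_tail hβ (fun k => hv (n + k)) 1]
  simp [add_div, add_assoc]

lemma expansionValue_eq_iff_of_eqOn (hβ : 1 < β) (hv : ∀ k, v k ∈ Icc 0 C)
    (hw : ∀ k, w k ∈ Icc 0 D) {n : ℕ} (h : ∀ k < n, v k = w k) :
    expansionValue β v = expansionValue β w ↔
      v n + expansionValue β (fun k => v (n + 1 + k)) =
        w n + expansionValue β (fun k => w (n + 1 + k)) := by
  have hprefix : ∑ k ∈ Finset.range n, v k / β ^ (k + 1) =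
      ∑ k ∈ Finset.range n, w k / β ^ (k + 1) :=
    Finset.sum_congr rfl fun k hk => by rw [h k (Finset.mem_range.1 hk)]
  rw [expansionValue_eq_sum_add_tail hβ hv (n + 1), expansionValue_eq_sum_add_tail hβ hw (n + 1),
    Finset.sum_range_succ, Finset.sum_range_succ, hprefix, add_assoc, add_assoc, add_right_inj,
    ← add_div, ← add_div, div_left_inj' (pow_pos (one_pos.trans hβ) _).ne']

lemma expansionValue_eq_of_remainder (hβ : 1 < β) (hv : ∀ k, v k ∈ Icc 0 C) {r : ℕ → ℝ}
    {M : ℝ} (hr : ∀ n, r n ∈ Icc 0 M) (hstep : ∀ n, r (n + 1) = β * r n - v n) :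
    expansionValue β v = r 0 := by
  have hβ0 : 0 < β := one_pos.trans hβ
  have hpartial : ∀ n, ∑ k ∈ Finset.range n, v k / β ^ (k + 1) = r 0 - r n / β ^ n := by
    intro n
    induction n with
    | zero => simp
    | succ n ih =>
      rw [Finset.sum_range_succ, ih, hstep, pow_succ]
      field_simp
      ring
  have hrem : Tendsto (fun n => r n / β ^ n) atTop (𝓝 0) := by
    refine squeeze_zero (fun n => div_nonneg (hr n).1 (pow_pos hβ0 n).le)
      (g := fun n => M * β⁻¹ ^ n) (fun n => ?_) ?_
    · rw [inv_pow, ← div_eq_mul_inv]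
      exact div_le_div_of_nonneg_right (hr n).2 (pow_pos hβ0 n).le
    · simpa using (tendsto_pow_atTop_nhds_zero_of_lt_one (inv_nonneg.2 hβ0.le)
        (inv_lt_one_of_one_lt₀ hβ)).const_mul M
  refine tendsto_nhds_unique (summable_expansion hβ hv).hasSum.tendsto_sum_nat ?_
  simpa [hpartial] using (tendsto_const_nhds (x := r 0)).sub hrem

end Value

section Greedy

variable {m β : ℝ}

noncomputable def greedyDigit (m β y : ℝ) : ℝ :=
  if m ≤ β * y then m else if 1 ≤ β * y then 1 else 0

noncomputable def greedyMap (m β y : ℝ) : ℝ := β * y - greedyDigit m β y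

lemma greedyDigit_mem (m β y : ℝ) : greedyDigit m β y ∈ ({0, 1, m} : Set ℝ) := by
  unfold greedyDigit
  split_ifs <;> simp

lemma mapsTo_greedyMap (hm1 : 1 ≤ m) (hm2 : m ≤ 2) (hβ : 1 < β) (hβ2 : β ≤ m + 1) :
    MapsTo (greedyMap m β) (Icc 0 (m / (β - 1))) (Icc 0 (m / (β - 1))) := by
  rintro y ⟨hy0, hyM⟩
  have hβ1 : 0 < β - 1 := sub_pos.2 hβ
  have hβM : β * (m / (β - 1)) = m + m / (β - 1) := by field_simp; ring
  have h1M : 1 ≤ m / (β - 1) := by rw [le_div_iff₀ hβ1]; linarith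
  have hm1M : m - 1 ≤ m / (β - 1) := by
    rw [le_div_iff₀ hβ1]
    nlinarith [mul_le_mul_of_nonneg_left (by linarith : β - 1 ≤ m) (by linarith : 0 ≤ m - 1)]
  have hβy : β * y ≤ m + m / (β - 1) := hβM ▸ mul_le_mul_of_nonneg_left hyM (by linarith)
  simp only [greedyMap, greedyDigit, mem_Icc]
  split_ifs with h1 h2 <;> constructor <;> nlinarith

theorem exists_expansion (hm1 : 1 ≤ m) (hm2 : m ≤ 2) (hβ : 1 < β) (hβ2 : β ≤ m + 1) {y : ℝ}
    (hy : y ∈ Icc 0 (m / (β - 1))) :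
    ∃ v : ℕ → ℝ, (∀ k, v k ∈ ({0, 1, m} : Set ℝ)) ∧ expansionValue β v = y :=
  ⟨fun k => greedyDigit m β ((greedyMap m β)^[k] y), fun _ => greedyDigit_mem _ _ _,
    expansionValue_eq_of_remainder hβ (fun _ => digits_subset_Icc hm1 (greedyDigit_mem _ _ _))
      (fun n => (mapsTo_greedyMap hm1 hm2 hβ hβ2).iterate n hy)
      (fun _ => Function.iterate_succ_apply' _ _ _)⟩

end Greedy

section Characterization

variable {m β : ℝ} {w : ℕ → ℝ}

lemma expansionValue_tail_lt_one (hβ : 1 < β) (hw : ∀ k, w k ∈ ({0, 1} : Set ℝ))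
    (h : ∀ i, w i = 1 → 1 + expansionValue β (fun k => w (i + 1 + k)) < β) (n : ℕ) :
    expansionValue β (fun k => w (n + k)) < 1 := by
  have hwI : ∀ k, w k ∈ Icc (0 : ℝ) 1 := fun k => binaryDigits_subset_Icc (hw k)
  have hhead : ∀ n, w n = 1 ∨ expansionValue β (fun k => w (n + 1 + k)) < 1 →
      expansionValue β (fun k => w (n + k)) < 1 := by
    intro n hn
    rw [expansionValue_tail_eq hβ hwI n, div_lt_one (one_pos.trans hβ)]
    obtain h0 | h1 : w n = 0 ∨ w n = 1 := hw n
    · linarith [hn.resolve_left (by rw [h0]; norm_num)]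
    · linarith [h n h1]
  by_cases hone : ∃ j, w (n + j) = 1
  · obtain ⟨j, hj⟩ := hone
    induction j generalizing n with
    | zero => exact hhead n (Or.inl hj)
    | succ j ih => exact hhead n (Or.inr (ih (n + 1) (by rwa [add_right_comm, add_assoc])))
  · push Not at hone
    have hzero : (fun k => w (n + k)) = fun _ => 0 :=
      funext fun k => (hw (n + k)).resolve_right (hone k)
    rw [hzero]
    simp [expansionValue]

lemma not_isUniqueExpansion_of_mem_Icc (hm1 : 1 ≤ m) (hm2 : m ≤ 2) (hβ : 1 < β)
    (hβ2 : β ≤ m + 1) (hw : ∀ k, w k ∈ ({0, 1, m} : Set ℝ)) {i : ℕ} {d : ℝ}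
    (hd : d ∈ ({0, 1, m} : Set ℝ)) (hdi : d ≠ w i)
    (hy : w i + expansionValue β (fun k => w (i + 1 + k)) - d ∈ Icc 0 (m / (β - 1))) :
    ¬ IsUniqueExpansion m β w := by
  intro huniq
  obtain ⟨t, ht, hty⟩ := exists_expansion hm1 hm2 hβ hβ2 hy
  let v : ℕ → ℝ := fun k => if k < i then w k else if k = i then d else t (k - (i + 1))
  have hvi : v i = d := by simp [v]
  have hvtail : (fun k => v (i + 1 + k)) = t := funext fun k => by
    simp only [v, if_neg (by omega : ¬ i + 1 + k < i), if_neg (by omega : i + 1 + k ≠ i)]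
    congr 1
    omega
  have hv : ∀ k, v k ∈ ({0, 1, m} : Set ℝ) := fun k => by
    simp only [v]
    split_ifs
    exacts [hw k, hd, ht _]
  have hval : expansionValue β v = expansionValue β w := by
    rw [expansionValue_eq_iff_of_eqOn hβ (fun k => digits_subset_Icc hm1 (hv k))
      (fun k => digits_subset_Icc hm1 (hw k)) (n := i) (fun k hk => if_pos hk), hvi, hvtail, hty]
    ring
  exact hdi (hvi ▸ congrFun (huniq v hv hval) i)

lemma bounds_of_isUniqueExpansion (hm1 : 1 < m) (hm2 : m ≤ 2) (hβ : 1 < β) (hβ2 : β ≤ m + 1)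
    (hw : ∀ k, w k ∈ ({0, 1} : Set ℝ)) (huniq : IsUniqueExpansion m β w) {i : ℕ}
    (hi : w i = 1) :
    m / (β - 1) < 1 + expansionValue β (fun k => w (i + 1 + k)) ∧
      1 + expansionValue β (fun k => w (i + 1 + k)) < m := by
  set T := expansionValue β (fun k => w (i + 1 + k))
  have hT : T ∈ Icc 0 (1 / (β - 1)) :=
    expansionValue_mem_Icc hβ fun k => binaryDigits_subset_Icc (hw (i + 1 + k))
  have hw' : ∀ k, w k ∈ ({0, 1, m} : Set ℝ) := fun k => binaryDigits_subset_digits m (hw k)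
  constructor
  · by_contra! hle
    refine not_isUniqueExpansion_of_mem_Icc hm1.le hm2 hβ hβ2 hw' (d := 0) (by simp)
      (by rw [hi]; norm_num) ?_ huniq
    rw [hi, sub_zero]
    exact ⟨by linarith [hT.1], hle⟩
  · by_contra! hle
    refine not_isUniqueExpansion_of_mem_Icc hm1.le hm2 hβ hβ2 hw' (d := m) (by simp)
      (by rw [hi]; exact hm1.ne') ?_ huniq
    rw [hi]
    refine ⟨by linarith, ?_⟩
    calc 1 + T - m ≤ 1 / (β - 1) := by linarith [hT.2]
      _ ≤ m / (β - 1) := by gcongr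

lemma isUniqueExpansion_of_bounds (hm1 : 1 < m) (hβ1 : m ≤ β)
    (hw : ∀ k, w k ∈ ({0, 1} : Set ℝ))
    (h : ∀ i, w i = 1 → m / (β - 1) < 1 + expansionValue β (fun k => w (i + 1 + k)) ∧
      1 + expansionValue β (fun k => w (i + 1 + k)) < m) :
    IsUniqueExpansion m β w := by
  classical
  have hβ : 1 < β := hm1.trans_le hβ1
  have hwI : ∀ k, w k ∈ Icc (0 : ℝ) 1 := fun k => binaryDigits_subset_Icc (hw k)
  intro v hv hval
  by_contra hne
  have hex : ∃ i, v i ≠ w i := Function.ne_iff.1 hne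
  set i := Nat.find hex
  have hvI : ∀ k, v k ∈ Icc 0 m := fun k => digits_subset_Icc hm1.le (hv k)
  have hdigit := (expansionValue_eq_iff_of_eqOn hβ hvI hwI (n := i)
    fun k hk => not_not.1 (Nat.find_min hex hk)).1 hval
  have hTv := expansionValue_mem_Icc hβ fun k => hvI (i + 1 + k)
  have hTw1 := expansionValue_tail_lt_one hβ hw (fun j hj => (h j hj).2.trans_le hβ1) (i + 1)
  have hvi : v i ≠ w i := Nat.find_spec hex
  obtain hwi | hwi : w i = 0 ∨ w i = 1 := hw i
  · obtain hv0 | hv1 | hvm : v i = 0 ∨ v i = 1 ∨ v i = m := hv i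
    · exact hvi (hv0.trans hwi.symm)
    · linarith [hTv.1]
    · linarith [hTv.1]
  · obtain ⟨hlo, hhi⟩ := h i hwi
    obtain hv0 | hv1 | hvm : v i = 0 ∨ v i = 1 ∨ v i = m := hv i
    · linarith [hTv.2]
    · exact hvi (hv1.trans hwi.symm)
    · linarith [hTv.1]

theorem isUniqueExpansion_iff (hm1 : 1 < m) (hm2 : m ≤ 2) (hβ1 : m ≤ β) (hβ2 : β ≤ m + 1)
    (hw : ∀ k, w k ∈ ({0, 1} : Set ℝ)) :
    IsUniqueExpansion m β w ↔
      ∀ i, w i = 1 → m / (β - 1) < 1 + expansionValue β (fun k => w (i + 1 + k)) ∧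
        1 + expansionValue β (fun k => w (i + 1 + k)) < m :=
  ⟨fun huniq _ hi => bounds_of_isUniqueExpansion hm1 hm2 (hm1.trans_le hβ1) hβ2 hw huniq hi,
    isUniqueExpansion_of_bounds hm1 hβ1 hw⟩

end Characterization

end BetaExpansion

open BetaExpansion in
theorem stmt_9_general (m β : ℝ) (hm1 : 1 < m) (hm2 : m ≤ 2) (hβ1 : m ≤ β) (hβ2 : β ≤ m + 1)
    (u : ℕ → Bool) :
    ((∀ v : ℕ → ℝ, (∀ k, v k = 0 ∨ v k = 1 ∨ v k = m) →
        (∑' k : ℕ, v k / β ^ (k + 1)) =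
          (∑' k : ℕ, (if u k then (1 : ℝ) else 0) / β ^ (k + 1)) →
        v = fun k => if u k then (1 : ℝ) else 0)
      ↔ (∀ i : ℕ, u i = true →
          m / (β - 1) < 1 + (∑' k : ℕ, (if u (i + 1 + k) then (1 : ℝ) else 0) / β ^ (k + 1)) ∧
          1 + (∑' k : ℕ, (if u (i + 1 + k) then (1 : ℝ) else 0) / β ^ (k + 1)) < m)) := by
  have hw : ∀ k, (if u k then (1 : ℝ) else 0) ∈ ({0, 1} : Set ℝ) := fun k => by
    cases u k <;> simp
  refine (isUniqueExpansion_iff hm1 hm2 hβ1 hβ2 hw).trans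
    (forall_congr' fun i => imp_congr_left ?_)
  cases u i <;> simp

/-- for m ∈ (1,2], β ∈ [m, m+1] and u ∈ {0,1}^ℕ \ {0^ω}, u is the unique
β-expansion of its value over {0,1,m} iff m/(β−1) < 1 + Σ_{k≥1} u_{i+k} β^{-k} < m
whenever u_i = 1. -/
theorem stmt_9 (m β : ℝ) (hm1 : 1 < m) (hm2 : m ≤ 2) (hβ1 : m ≤ β) (hβ2 : β ≤ m + 1)
    (u : ℕ → Bool) (hu : u ≠ fun _ => false) :
    ((∀ v : ℕ → ℝ, (∀ k, v k = 0 ∨ v k = 1 ∨ v k = m) →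
        (∑' k : ℕ, v k / β ^ (k + 1)) =
          (∑' k : ℕ, (if u k then (1 : ℝ) else 0) / β ^ (k + 1)) →
        v = fun k => if u k then (1 : ℝ) else 0)
      ↔ (∀ i : ℕ, u i = true →
          m / (β - 1) < 1 + (∑' k : ℕ, (if u (i + 1 + k) then (1 : ℝ) else 0) / β ^ (k + 1)) ∧
          1 + (∑' k : ℕ, (if u (i + 1 + k) then (1 : ℝ) else 0) / β ^ (k + 1)) < m)) :=
  stmt_9_general m β hm1 hm2 hβ1 hβ2 u
end

section
/- Let σ be a finite composition of substitutions from S = {τ_h : h ≥ 0}, let u_0 u_1 u_2 … = σ(1^ω), and let m > 1. Then there is a unique real number g_σ(m) > 1 satisfying m/(g_σ(m)−1) = 1 + Σ_{k≥0} u_k g_σ(m)^{-(k+1)}, and the function m ↦ g_σ(m) is strictly increasing. -/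
/-- The word 1^ω. -/
def onesW : ℕ → Bool := fun _ => true

/-!
Since `∑ x^{-(k+1)} = 1/(x-1)`, the series `∑ u_k x^{-(k+1)}` equals `1/(x-1) - H(x)` with
`H(x) = ∑ (1-u_k) x^{-(k+1)}`, a nonnegative antitone function of `x`. The equation then reads
`(m-1)/(x-1) + H(x) = 1`, whose left side is strictly decreasing in `x > 1` and strictly increasing
in `m`: this gives uniqueness and monotonicity, and existence follows from the intermediate value
theorem on `[m, m+1]`.
-/

open Set

noncomputable def digitValue (c : ℕ → ℝ) (x : ℝ) : ℝ :=
  ∑' k, c k / x ^ (k + 1)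

section

variable {c : ℕ → ℝ} {x m : ℝ}

lemma summable_one_div_pow_succ (hx : 1 < x) : Summable fun k : ℕ => 1 / x ^ (k + 1) := by
  have h := summable_geometric_of_lt_one (inv_nonneg.2 (zero_le_one.trans hx.le))
    (inv_lt_one_of_one_lt₀ hx)
  simpa only [one_div, inv_pow, pow_succ, mul_inv] using h.mul_right x⁻¹

lemma tsum_one_div_pow_succ (hx : 1 < x) : ∑' k : ℕ, 1 / x ^ (k + 1) = (x - 1)⁻¹ := by
  have hx1 : x - 1 ≠ 0 := sub_ne_zero.2 hx.ne'
  simp only [one_div, pow_succ, mul_inv, ← inv_pow]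
  rw [tsum_mul_right, tsum_geometric_of_lt_one (inv_nonneg.2 (zero_le_one.trans hx.le))
    (inv_lt_one_of_one_lt₀ hx)]
  field_simp

lemma one_sub_mem_Icc (hc : ∀ k, c k ∈ Icc (0 : ℝ) 1) (k : ℕ) :
    1 - c k ∈ Icc (0 : ℝ) 1 :=
  ⟨sub_nonneg.2 (hc k).2, sub_le_self _ (hc k).1⟩

lemma summable_div_pow_succ (hc : ∀ k, c k ∈ Icc (0 : ℝ) 1) (hx : 1 < x) :
    Summable fun k : ℕ => c k / x ^ (k + 1) :=
  (summable_one_div_pow_succ hx).of_nonneg_of_le (fun k => div_nonneg (hc k).1 (by positivity))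
    fun k => div_le_div_of_nonneg_right (hc k).2 (by positivity)

lemma digitValue_nonneg (hc : ∀ k, c k ∈ Icc (0 : ℝ) 1) (hx : 1 < x) : 0 ≤ digitValue c x :=
  tsum_nonneg fun k => div_nonneg (hc k).1 (by positivity)

lemma digitValue_add_digitValue_one_sub (hc : ∀ k, c k ∈ Icc (0 : ℝ) 1) (hx : 1 < x) :
    digitValue c x + digitValue (fun k => 1 - c k) x = (x - 1)⁻¹ := by
  rw [digitValue, digitValue, ← (summable_div_pow_succ hc hx).tsum_add
    (summable_div_pow_succ (one_sub_mem_Icc hc) hx), ← tsum_one_div_pow_succ hx]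
  congr 1
  funext k
  ring

lemma digitValue_le (hc : ∀ k, c k ∈ Icc (0 : ℝ) 1) (hx : 1 < x) :
    digitValue c x ≤ (x - 1)⁻¹ := by
  rw [← digitValue_add_digitValue_one_sub hc hx]
  exact le_add_of_nonneg_right (digitValue_nonneg (one_sub_mem_Icc hc) hx)

lemma antitoneOn_digitValue (hc : ∀ k, c k ∈ Icc (0 : ℝ) 1) :
    AntitoneOn (digitValue c) (Ioi 1) := by
  intro x (hx : 1 < x) y _ hxy
  refine (summable_div_pow_succ hc (hx.trans_le hxy)).tsum_le_tsum (fun k => ?_)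
    (summable_div_pow_succ hc hx)
  exact div_le_div_of_nonneg_left (hc k).1 (by positivity) (by gcongr)

lemma continuousOn_digitValue (hc : ∀ k, c k ∈ Icc (0 : ℝ) 1) {a : ℝ} (ha : 1 < a) :
    ContinuousOn (digitValue c) (Ici a) := by
  refine continuousOn_tsum (fun k => ?_) (summable_one_div_pow_succ ha) fun k x (hx : a ≤ x) => ?_
  · exact continuousOn_const.div (continuousOn_pow _) fun x (hx : a ≤ x) =>
      (pow_pos (by linarith) _).ne'
  · have hx0 : 0 < x := by linarith
    rw [Real.norm_of_nonneg (div_nonneg (hc k).1 (by positivity))]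
    exact div_le_div₀ zero_le_one (hc k).2 (by positivity) (by gcongr)


lemma div_sub_one_eq_one_add_digitValue_iff (hc : ∀ k, c k ∈ Icc (0 : ℝ) 1) (hx : 1 < x) :
    m / (x - 1) = 1 + digitValue c x ↔
      (m - 1) / (x - 1) + digitValue (fun k => 1 - c k) x = 1 := by
  have h := digitValue_add_digitValue_one_sub hc hx
  rw [sub_div, one_div]
  constructor <;> intro <;> linarith

lemma strictAntiOn_sub_one_div_add_digitValue (hc : ∀ k, c k ∈ Icc (0 : ℝ) 1) (hm : 1 < m) :
    StrictAntiOn (fun x => (m - 1) / (x - 1) + digitValue c x) (Ioi 1) := by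
  refine StrictAntiOn.add_antitone (fun x (hx : 1 < x) y _ hxy => ?_) (antitoneOn_digitValue hc)
  exact div_lt_div_of_pos_left (by linarith) (by linarith) (by linarith)

theorem existsUnique_div_sub_one_eq_one_add_digitValue (hc : ∀ k, c k ∈ Icc (0 : ℝ) 1)
    (hm : 1 < m) : ∃! x, 1 < x ∧ m / (x - 1) = 1 + digitValue c x := by
  have hc' := one_sub_mem_Icc hc
  have hanti := strictAntiOn_sub_one_div_add_digitValue hc' hm
  have h_left : 1 ≤ (m - 1) / (m - 1) + digitValue (fun k => 1 - c k) m := by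
    rw [div_self (by linarith)]
    exact le_add_of_nonneg_right (digitValue_nonneg hc' hm)
  have h_right : (m - 1) / (m + 1 - 1) + digitValue (fun k => 1 - c k) (m + 1) ≤ 1 := by
    have := digitValue_le hc' (show 1 < m + 1 by linarith)
    rw [add_sub_cancel_right] at *
    have : (m - 1) / m + m⁻¹ = 1 := by field_simp [(by linarith : m ≠ 0)]; ring
    linarith
  have hcont : ContinuousOn (fun x => (m - 1) / (x - 1) + digitValue (fun k => 1 - c k) x)
      (Icc m (m + 1)) :=
    (continuousOn_const.div (continuous_sub_right 1).continuousOn fun x hx =>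
      sub_ne_zero.2 (by linarith [hx.1])).add
      ((continuousOn_digitValue hc' hm).mono Icc_subset_Ici_self)
  obtain ⟨x, hxI, hx⟩ := intermediate_value_Icc' (by linarith) hcont ⟨h_right, h_left⟩
  have hx1 : 1 < x := by linarith [hxI.1]
  refine ⟨x, ⟨hx1, (div_sub_one_eq_one_add_digitValue_iff hc hx1).2 hx⟩,
    fun y ⟨hy1, hy⟩ => hanti.injOn hy1 hx1 ?_⟩
  exact ((div_sub_one_eq_one_add_digitValue_iff hc hy1).1 hy).trans hx.symm

theorem strictMonoOn_of_div_sub_one_eq_one_add_digitValue (hc : ∀ k, c k ∈ Icc (0 : ℝ) 1)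
    {g : ℝ → ℝ} (hg : ∀ m, 1 < m → 1 < g m ∧ m / (g m - 1) = 1 + digitValue c (g m)) :
    StrictMonoOn g (Ioi 1) := by
  intro p (hp : 1 < p) q (hq : 1 < q) hpq
  obtain ⟨hgp, hp_eq⟩ := hg p hp
  obtain ⟨hgq, hq_eq⟩ := hg q hq
  rw [div_sub_one_eq_one_add_digitValue_iff hc hgp] at hp_eq
  rw [div_sub_one_eq_one_add_digitValue_iff hc hgq] at hq_eq
  by_contra! hle
  have hanti := (strictAntiOn_sub_one_div_add_digitValue (one_sub_mem_Icc hc) hq).antitoneOn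
  refine lt_irrefl (1 : ℝ) ?_
  calc (1 : ℝ) = (p - 1) / (g p - 1) + digitValue (fun k => 1 - c k) (g p) := hp_eq.symm
    _ < (q - 1) / (g p - 1) + digitValue (fun k => 1 - c k) (g p) := by gcongr
    _ ≤ (q - 1) / (g q - 1) + digitValue (fun k => 1 - c k) (g q) := hanti hgq hgp hle
    _ = 1 := hq_eq

end

/-- with u = σ(1^ω), for each m > 1 there is a unique g_σ(m) > 1 with
m/(g_σ(m)−1) = 1 + Σ_{k≥0} u_k g_σ(m)^{-(k+1)}, and g_σ is strictly increasing. -/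
theorem stmt_11 (hs : List ℕ) :
    (∀ m : ℝ, 1 < m → ∃! x : ℝ, 1 < x ∧
      m / (x - 1) = 1 + ∑' k : ℕ, (if applyComp hs onesW k then (1 : ℝ) else 0) / x ^ (k + 1)) ∧
    (∀ g : ℝ → ℝ,
      (∀ m : ℝ, 1 < m → 1 < g m ∧
        m / (g m - 1) = 1 + ∑' k : ℕ,
          (if applyComp hs onesW k then (1 : ℝ) else 0) / (g m) ^ (k + 1)) →
      StrictMonoOn g (Set.Ioi 1)) := by
  have hc (k : ℕ) : (if applyComp hs onesW k then (1 : ℝ) else 0) ∈ Icc (0 : ℝ) 1 := by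
    split_ifs <;> simp
  exact ⟨fun m hm => existsUnique_div_sub_one_eq_one_add_digitValue hc hm,
    fun g hg => strictMonoOn_of_div_sub_one_eq_one_add_digitValue hc hg⟩
end
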